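/- arXiv:2306.13247 — 6 statements merged into one kernel-verified Lean document; each statement's English description precedes it below -/
import Mathlib

section
/- Let R, κ be positive integers, let a : Fin R → Fin κ → ℝ be a nonnegative amplitude state, and let σ : Fin R → Fin κ satisfy a(j,x) ≤ a(j,σ(j)) for all j, x (σ picks a maximal entry in each row). Set γ := ∑_{j ∈ Fin R} a(j,σ(j))². Fix d ≥ 0. If V(a) = 1 − (1+d)/κ, then γ ≥ 1 − d; consequently, when γ > 0, the normalized state φ with φ(j,x) = a(j,σ(j))/√γ for x = σ(j) and φ(j,x) = 0 otherwise satisfies |⟨a, φ⟩|² = γ ≥ 1 − d. -/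
/-- **Nonnegative valid states** (Lemma `non-negative_valid`).
Let `a` be a nonnegative amplitude state, `σ` pick a maximal entry in each row,
and `γ = ∑ j, a j (σ j)²`. If the Validity-test value equals `1 - (1+d)/κ`
for some `d ≥ 0`, then `γ ≥ 1 - d`; consequently, when `γ > 0`, the normalized
state `φ` supported on `{(j, σ j)}` with amplitudes `a j (σ j) / √γ` satisfies
`|⟨a, φ⟩|² = γ`. -/
theorem nonnegative_valid (R κ : ℕ) (hR : 0 < R) (hκ : 0 < κ)
    (a : Fin R → Fin κ → ℝ)
    (hnn : ∀ j x, 0 ≤ a j x)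
    (hnorm : ∑ j, ∑ x, (a j x) ^ 2 = 1)
    (σ : Fin R → Fin κ) (hσ : ∀ j x, a j x ≤ a j (σ j))
    (γ : ℝ) (hγ : γ = ∑ j, (a j (σ j)) ^ 2)
    (d : ℝ) (hd : 0 ≤ d)
    (hV : 1 - (1 / (κ : ℝ)) * ∑ j, (∑ x, a j x) ^ 2 = 1 - (1 + d) / (κ : ℝ)) :
    1 - d ≤ γ ∧
      (0 < γ →
        (∑ j, ∑ x, a j x *
            (if x = σ j then a j (σ j) / Real.sqrt γ else 0)) ^ 2 = γ) := by
  have hκ' : (0:ℝ) < κ := by exact_mod_cast hκ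
  have hS : ∑ j, (∑ x, a j x) ^ 2 = 1 + d := by
    field_simp at hV
    linarith
  have key : ∀ j : Fin R,
      2 * (∑ x, (a j x) ^ 2) ≤ (a j (σ j)) ^ 2 + (∑ x, a j x) ^ 2 := by
    intro j
    have hq : ∑ x, (a j x) ^ 2 ≤ a j (σ j) * ∑ x, a j x := by
      rw [Finset.mul_sum]
      apply Finset.sum_le_sum
      intro x _
      have := mul_le_mul_of_nonneg_right (hσ j x) (hnn j x)
      nlinarith [this]
    nlinarith [sq_nonneg (a j (σ j) - ∑ x, a j x)]
  have hsum := Finset.sum_le_sum (fun j (_ : j ∈ Finset.univ) => key j)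
  rw [← Finset.mul_sum, hnorm, Finset.sum_add_distrib, hS] at hsum
  constructor
  · linarith [hsum, hγ]
  · intro hγpos
    have hstep : ∀ j : Fin R,
        (∑ x, a j x * (if x = σ j then a j (σ j) / Real.sqrt γ else 0))
          = a j (σ j) * (a j (σ j) / Real.sqrt γ) := by
      intro j
      simp [mul_ite, mul_zero]
    rw [Finset.sum_congr rfl (fun j _ => hstep j)]
    have hsq : Real.sqrt γ ^ 2 = γ := Real.sq_sqrt hγpos.le
    have : ∑ j, a j (σ j) * (a j (σ j) / Real.sqrt γ)
        = γ / Real.sqrt γ := by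
      rw [hγ, Finset.sum_div]
      apply Finset.sum_congr rfl
      intro j _
      ring
    rw [this, div_pow, hsq]
    field_simp
end

section
/- Let a : Fin R → Fin κ → ℝ satisfy a(j,x) ≥ 0 for all j, x, and let σ : Fin R → Fin κ satisfy a(j,x) ≤ a(j,σ(j)) for all j, x. Then ∑_{j ∈ Fin R} ∑_{y ≠ σ(j)} a(j,y)² ≤ ∑_{j ∈ Fin R} ∑_{x ≠ y} a(j,x)·a(j,y), where the right-hand inner sum ranges over ordered pairs (x,y) ∈ Fin κ × Fin κ with x ≠ y. -/
/-- **Cross terms dominate off-maximal mass** (key inequality in the proof of the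
nonnegative-valid lemma). For nonnegative `a : Fin R → Fin κ → ℝ` with `σ j` a
maximal entry of row `j`, the squared mass of each row outside its maximal entry
is dominated by the off-diagonal cross terms of that row. -/
theorem offdiag_cross_terms_dominate (R κ : ℕ)
    (a : Fin R → Fin κ → ℝ)
    (hnn : ∀ j x, 0 ≤ a j x)
    (σ : Fin R → Fin κ) (hσ : ∀ j x, a j x ≤ a j (σ j)) :
    ∑ j, ∑ y ∈ Finset.univ.filter (fun y => y ≠ σ j), (a j y) ^ 2 ≤
      ∑ j, ∑ p ∈ Finset.univ.filter (fun p : Fin κ × Fin κ => p.1 ≠ p.2),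
        a j p.1 * a j p.2 := by
  apply Finset.sum_le_sum
  intro j _
  calc ∑ y ∈ Finset.univ.filter (fun y => y ≠ σ j), (a j y) ^ 2
      ≤ ∑ y ∈ Finset.univ.filter (fun y => y ≠ σ j), a j (σ j) * a j y := by
        apply Finset.sum_le_sum
        intro y _
        rw [sq]
        exact mul_le_mul_of_nonneg_right (hσ j y) (hnn j y)
    _ = ∑ p ∈ (Finset.univ.filter (fun y => y ≠ σ j)).image
          (fun y => ((σ j, y) : Fin κ × Fin κ)), a j p.1 * a j p.2 := by
        rw [Finset.sum_image]
        intro x _ y _ h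
        exact (Prod.mk.injEq _ _ _ _ ▸ h).2
    _ ≤ ∑ p ∈ Finset.univ.filter (fun p : Fin κ × Fin κ => p.1 ≠ p.2),
          a j p.1 * a j p.2 := by
        apply Finset.sum_le_sum_of_subset_of_nonneg
        · intro p hp
          simp only [Finset.mem_image, Finset.mem_filter, Finset.mem_univ, true_and] at hp ⊢
          obtain ⟨y, hy, rfl⟩ := hp
          exact fun h => hy h.symm
        · intro p _ _
          exact mul_nonneg (hnn j p.1) (hnn j p.2)
end

section
/- Let R, κ be positive integers, let a : Fin R → Fin κ → ℝ be a nonnegative amplitude state, and let σ : Fin R → Fin κ satisfy a(j,x) ≤ a(j,σ(j)) for all j, x. Let d₂ ≥ d₁ ≥ 0 be such that D(a) = 1/κ − d₁ and V(a) = 1 − 1/κ − d₂. Then (1/R)·(∑_{j ∈ Fin R} a(j,σ(j)))² ≥ 1 − κ·d₁ − (κ+1)·√(κ·d₂). (The left-hand side is the squared overlap |⟨χ, a⟩|² of a with the uniform state χ supported on {(j, σ(j)) : j ∈ Fin R} with amplitudes 1/√R.) -/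
set_option maxHeartbeats 800000

/-- **Rigidity lemma** (Lemma `validform`).
Let `a` be a nonnegative amplitude state and `σ` pick a maximal entry in each row.
If the Density-test value is `1/κ - d₁` and the Validity-test value is
`1 - 1/κ - d₂` with `0 ≤ d₁ ≤ d₂`, then the squared overlap of `a` with the
uniform rigid state `χ = (1/√R) ∑_j |j⟩|σ(j)⟩`, namely
`(1/R) * (∑ j, a j (σ j))²`, is at least `1 - κ d₁ - (κ+1) √(κ d₂)`. -/
theorem rigidity_lemma (R κ : ℕ) (hR : 0 < R) (hκ : 0 < κ)
    (a : Fin R → Fin κ → ℝ)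
    (hnn : ∀ j x, 0 ≤ a j x)
    (hnorm : ∑ j, ∑ x, (a j x) ^ 2 = 1)
    (σ : Fin R → Fin κ) (hσ : ∀ j x, a j x ≤ a j (σ j))
    (d₁ d₂ : ℝ) (hd₁ : 0 ≤ d₁) (hd₁₂ : d₁ ≤ d₂)
    (hD : (1 / ((κ : ℝ) * R)) * (∑ j, ∑ x, a j x) ^ 2 = 1 / (κ : ℝ) - d₁)
    (hV : 1 - (1 / (κ : ℝ)) * ∑ j, (∑ x, a j x) ^ 2 = 1 - 1 / (κ : ℝ) - d₂) :
    1 - (κ : ℝ) * d₁ - ((κ : ℝ) + 1) * Real.sqrt ((κ : ℝ) * d₂) ≤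
      (1 / (R : ℝ)) * (∑ j, a j (σ j)) ^ 2 := by
  have hκR : (0:ℝ) < κ := by exact_mod_cast hκ
  have hRR : (0:ℝ) < R := by exact_mod_cast hR
  have hd₂ : (0:ℝ) ≤ d₂ := le_trans hd₁ hd₁₂
  set E : ℝ := (κ:ℝ) * d₂ with hE
  have hE0 : 0 ≤ E := mul_nonneg hκR.le hd₂
  set t : ℝ := Real.sqrt E with ht
  have ht0 : 0 ≤ t := Real.sqrt_nonneg _
  have ht2 : t ^ 2 = E := Real.sq_sqrt hE0
  -- row sums, maxima, tails
  set s : Fin R → ℝ := fun j => ∑ x, a j x with hs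
  set m : Fin R → ℝ := fun j => a j (σ j) with hm
  set T : Fin R → ℝ := fun j => ∑ x ∈ Finset.univ.erase (σ j), a j x with hT
  have hm0 : ∀ j, 0 ≤ m j := fun j => hnn j (σ j)
  have hT0 : ∀ j, 0 ≤ T j := fun j =>
    Finset.sum_nonneg fun x _ => hnn j x
  have hsplit : ∀ j, s j = m j + T j := fun j =>
    (Finset.add_sum_erase Finset.univ (a j) (Finset.mem_univ (σ j))).symm
  -- card of erased set
  have hcard : ∀ j, (Finset.univ.erase (σ j)).card = κ - 1 := by
    intro j
    rw [Finset.card_erase_of_mem (Finset.mem_univ _), Finset.card_univ, Fintype.card_fin]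
  -- from hV : ∑ s² = 1 + E
  have hVsum : ∑ j, (s j) ^ 2 = 1 + E := by
    have h := hV
    field_simp at h
    rw [hE]
    nlinarith [h]
  -- from hD : (∑ s)² = R - κ R d₁
  have hS2 : (∑ j, s j) ^ 2 = (R:ℝ) - (κ:ℝ) * R * d₁ := by
    have h := hD
    have hκR0 : ((κ:ℝ) * R) ≠ 0 := by positivity
    field_simp at h
    nlinarith [h]
  -- key per-row inequality: q_j + 2 m_j T_j ≤ s_j²
  have hrow : ∀ j, (∑ x, (a j x) ^ 2) + 2 * m j * T j ≤ (s j) ^ 2 := by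
    intro j
    have h1 : ∑ x ∈ Finset.univ.erase (σ j), (a j x) ^ 2 ≤ (T j) ^ 2 :=
      Finset.sum_sq_le_sq_sum_of_nonneg (fun x _ => hnn j x)
    have h2 : (∑ x, (a j x) ^ 2) = m j ^ 2 + ∑ x ∈ Finset.univ.erase (σ j), (a j x) ^ 2 :=
      (Finset.add_sum_erase Finset.univ (fun x => (a j x) ^ 2) (Finset.mem_univ (σ j))).symm
    have h3 : s j = m j + T j := hsplit j
    have h4 : (s j) ^ 2 = m j ^ 2 + 2 * m j * T j + T j ^ 2 := by rw [h3]; ring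
    linarith [h1, h2, h4]
  -- sum: ∑ m T ≤ E / 2
  have hmT : ∑ j, m j * T j ≤ E / 2 := by
    have h := Finset.sum_le_sum (fun j (_ : j ∈ Finset.univ) => hrow j)
    rw [Finset.sum_add_distrib, hnorm, hVsum] at h
    have : ∑ j, 2 * m j * T j = 2 * ∑ j, m j * T j := by
      rw [Finset.mul_sum]; exact Finset.sum_congr rfl fun j _ => by ring
    rw [this] at h
    linarith
  -- T j ≤ (κ-1) m j
  have hTm : ∀ j, T j ≤ ((κ:ℝ) - 1) * m j := by
    intro j
    have h := Finset.sum_le_card_nsmul (Finset.univ.erase (σ j)) (a j) (m j)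
      (fun x _ => hσ j x)
    rw [hcard j, nsmul_eq_mul] at h
    have hc : ((κ - 1 : ℕ) : ℝ) = (κ:ℝ) - 1 := by
      rw [Nat.cast_sub hκ]; norm_num
    rw [hc] at h
    exact h
  -- ∑ T² ≤ (κ-1) * (E/2)
  have hT2sum : ∑ j, (T j) ^ 2 ≤ ((κ:ℝ) - 1) * (E / 2) := by
    have h1 : ∑ j, (T j) ^ 2 ≤ ∑ j, ((κ:ℝ) - 1) * (m j * T j) := by
      apply Finset.sum_le_sum
      intro j _
      have h := mul_le_mul_of_nonneg_right (hTm j) (hT0 j)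
      calc (T j) ^ 2 = T j * T j := by ring
        _ ≤ (((κ:ℝ) - 1) * m j) * T j := h
        _ = ((κ:ℝ) - 1) * (m j * T j) := by ring
    have h2 : ∑ j, ((κ:ℝ) - 1) * (m j * T j) = ((κ:ℝ) - 1) * ∑ j, m j * T j := by
      rw [Finset.mul_sum]
    have hκ1 : (0:ℝ) ≤ (κ:ℝ) - 1 := by
      have : (1:ℝ) ≤ κ := by exact_mod_cast hκ
      linarith
    calc ∑ j, (T j) ^ 2 ≤ ((κ:ℝ) - 1) * ∑ j, m j * T j := by rw [← h2]; exact h1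
      _ ≤ ((κ:ℝ) - 1) * (E / 2) := mul_le_mul_of_nonneg_left hmT hκ1
  -- Cauchy–Schwarz on T
  have hCS : (∑ j, T j) ^ 2 ≤ (R:ℝ) * ∑ j, (T j) ^ 2 := by
    have := sq_sum_le_card_mul_sum_sq (s := (Finset.univ : Finset (Fin R))) (f := T)
    simpa [Finset.card_univ] using this
  set S : ℝ := ∑ j, s j with hSdef
  set M : ℝ := ∑ j, m j with hMdef
  set W : ℝ := ∑ j, T j with hWdef
  have hSMW : S = M + W := by
    rw [hSdef, hMdef, hWdef, ← Finset.sum_add_distrib]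
    exact Finset.sum_congr rfl fun j _ => hsplit j
  have hM0 : 0 ≤ M := Finset.sum_nonneg fun j _ => hm0 j
  have hW0 : 0 ≤ W := Finset.sum_nonneg fun j _ => hT0 j
  have hS0 : 0 ≤ S := by rw [hSMW]; positivity
  have hSle : S ^ 2 ≤ (R:ℝ) := by
    rw [hS2]; nlinarith [mul_nonneg (mul_nonneg hκR.le hRR.le) hd₁]
  have hW2 : W ^ 2 ≤ (R:ℝ) * (((κ:ℝ) - 1) * (E / 2)) :=
    le_trans hCS (mul_le_mul_of_nonneg_left hT2sum hRR.le)
  -- 2 S W ≤ R (κ+1) t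
  have hkey : 2 * S * W ≤ (R:ℝ) * ((κ:ℝ) + 1) * t := by
    have hsq : (2 * S * W) ^ 2 ≤ ((R:ℝ) * ((κ:ℝ) + 1) * t) ^ 2 := by
      have h1 : (2 * S * W) ^ 2 = 4 * S ^ 2 * W ^ 2 := by ring
      have h2 : 4 * S ^ 2 * W ^ 2 ≤ 4 * (R:ℝ) * ((R:ℝ) * (((κ:ℝ) - 1) * (E / 2))) := by
        have hW20 : 0 ≤ W ^ 2 := sq_nonneg _
        nlinarith [mul_le_mul hSle hW2 hW20 hRR.le]
      have hκ1 : (1:ℝ) ≤ κ := by exact_mod_cast hκ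
      have h3 : 4 * (R:ℝ) * ((R:ℝ) * (((κ:ℝ) - 1) * (E / 2))) ≤ ((R:ℝ) * ((κ:ℝ) + 1) * t) ^ 2 := by
        have : ((R:ℝ) * ((κ:ℝ) + 1) * t) ^ 2 = (R:ℝ)^2 * ((κ:ℝ) + 1)^2 * E := by
          rw [mul_pow, mul_pow, ht2]
        rw [this]
        nlinarith [sq_nonneg ((κ:ℝ) - 1), mul_nonneg (mul_nonneg (sq_nonneg (R:ℝ)) hE0) (sq_nonneg ((κ:ℝ) + 1)), hE0, sq_nonneg (R:ℝ), mul_nonneg (sq_nonneg (R:ℝ)) hE0]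
      linarith [h1 ▸ le_trans h2 h3]
    have hrhs0 : 0 ≤ (R:ℝ) * ((κ:ℝ) + 1) * t := by positivity
    have hlhs0 : 0 ≤ 2 * S * W := by positivity
    nlinarith [hsq, hrhs0, hlhs0]
  -- conclude
  have hM2 : (R:ℝ) * (1 - (κ:ℝ) * d₁ - ((κ:ℝ) + 1) * t) ≤ M ^ 2 := by
    have : M ^ 2 = S ^ 2 - 2 * S * W + W ^ 2 := by rw [hSMW]; ring
    nlinarith [sq_nonneg W, hS2, hkey]
  have hfin : 1 - (κ:ℝ) * d₁ - ((κ:ℝ) + 1) * t ≤ M ^ 2 / R := by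
    rw [le_div_iff₀ hRR]
    calc (1 - (κ:ℝ) * d₁ - ((κ:ℝ) + 1) * t) * R
        = (R:ℝ) * (1 - (κ:ℝ) * d₁ - ((κ:ℝ) + 1) * t) := by ring
      _ ≤ M ^ 2 := hM2
  calc 1 - (κ:ℝ) * d₁ - ((κ:ℝ) + 1) * t ≤ M ^ 2 / R := hfin
    _ = (1 / (R:ℝ)) * M ^ 2 := by ring
end

section
/- Let R, κ be positive integers, let a : Fin R → Fin κ → ℝ be a nonnegative amplitude state, and let p₁, p₂ be reals with 0 ≤ p₁ ≤ p₂. Then p₁·D(a) + p₂·V(a) ≤ p₁·(1/κ) + p₂·(1 − 1/κ). -/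
/-- **Weighted rigidity-test bound.** If the Validity test is run with probability
at least that of the Density test, then the combined success probability
`p₁ D(a) + p₂ V(a)` of any nonnegative amplitude state is at most the
completeness value `p₁/κ + p₂ (1 - 1/κ)`. -/
theorem weighted_tests_bound (R κ : ℕ) (hR : 0 < R) (hκ : 0 < κ)
    (a : Fin R → Fin κ → ℝ)
    (hnn : ∀ j x, 0 ≤ a j x)
    (hnorm : ∑ j, ∑ x, (a j x) ^ 2 = 1)
    (p₁ p₂ : ℝ) (hp₁ : 0 ≤ p₁) (hp₁₂ : p₁ ≤ p₂) :
    p₁ * ((1 / ((κ : ℝ) * R)) * (∑ j, ∑ x, a j x) ^ 2) +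
        p₂ * (1 - (1 / (κ : ℝ)) * ∑ j, (∑ x, a j x) ^ 2) ≤
      p₁ * (1 / (κ : ℝ)) + p₂ * (1 - 1 / (κ : ℝ)) := by
  set T : ℝ := ∑ j, ∑ x, a j x with hTdef
  set Q : ℝ := ∑ j, (∑ x, a j x) ^ 2 with hQdef
  have hκ' : (0:ℝ) < κ := by exact_mod_cast hκ
  have hR' : (0:ℝ) < R := by exact_mod_cast hR
  -- Q ≥ 1
  have hQ1 : 1 ≤ Q := by
    rw [← hnorm]
    apply Finset.sum_le_sum
    intro j _
    exact Finset.sum_sq_le_sq_sum_of_nonneg (fun x _ => hnn j x)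
  -- Cauchy–Schwarz: T² ≤ R·Q
  have hT : T ^ 2 ≤ (R:ℝ) * Q := by
    have := sq_sum_le_card_mul_sum_sq (s := (Finset.univ : Finset (Fin R)))
      (f := fun j => ∑ x, a j x)
    simpa [hTdef, hQdef] using this
  have key : p₁ * (T ^ 2 / ((κ:ℝ) * R)) + p₂ * (1 - Q / κ) ≤
      p₁ * (1 / κ) + p₂ * (1 - 1 / κ) := by
    have h1 : T ^ 2 / ((κ:ℝ) * R) ≤ Q / κ := by
      rw [div_le_div_iff₀ (by positivity) hκ']
      nlinarith
    have h2 : (p₂ - p₁) * (1 / (κ:ℝ)) ≤ (p₂ - p₁) * (Q / κ) := by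
      apply mul_le_mul_of_nonneg_left _ (by linarith)
      gcongr
    have h3 := mul_le_mul_of_nonneg_left h1 hp₁
    linarith
  calc p₁ * ((1 / ((κ : ℝ) * R)) * T ^ 2) + p₂ * (1 - (1 / (κ : ℝ)) * Q)
      = p₁ * (T ^ 2 / ((κ:ℝ) * R)) + p₂ * (1 - Q / κ) := by ring
    _ ≤ _ := key
end

section
/- Let M be the 2 × 2 real matrix M = (1/2)·[[1, −1], [−1, 1]] (the orthogonal projector onto (1/√2)(e₀ − e₁)). Then: (i) for every v : Fin 2 → ℝ with v(i) ≥ 0 for all i and v(0)² + v(1)² = 1, one has ‖M.mulVec v‖ ≤ 1/√2; and (ii) the vector w : Fin 2 × Fin 2 → ℝ with w(0,0) = w(1,1) = 1/√2 and w(0,1) = w(1,0) = 0 has nonnegative entries, unit Euclidean norm, and satisfies ‖(M ⊗ M).mulVec w‖ = 1/√2 > (1/√2)², where M ⊗ M is the Kronecker product. Hence there exists a Hermitian positive semidefinite matrix M for which the maximum of ‖(M ⊗ M)w‖ over nonnegative unit vectors w strictly exceeds the square of the maximum of ‖Mv‖ over nonnegative unit vectors v. -/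
open Matrix Kronecker

/-!
For a nonnegative unit vector `v`, `‖M v‖² = (v₀ - v₁)² / 2 ≤ (v₀² + v₁²) / 2`, since `v₀ v₁ ≥ 0`.
The vector `w` is the vectorisation of `I / √2`, and `(M ⊗ M) vec X = vec (M X Mᵀ)`; as `M` is a
symmetric idempotent this sends `w` to `vec M / √2`, of norm `‖M‖_F / √2 = 1 / √2`.
-/

theorem sub_sq_le_sq_add_sq {a b : ℝ} (ha : 0 ≤ a) (hb : 0 ≤ b) : (a - b) ^ 2 ≤ a ^ 2 + b ^ 2 := by
  nlinarith [mul_nonneg ha hb]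

namespace Matrix

variable {n R : Type*} [Fintype n] [DecidableEq n]

theorem kronecker_mulVec_vec_smul_one [CommSemiring R] {P : Matrix n n R} (hP : P.IsSymm)
    (hPP : IsIdempotentElem P) (c : R) : (P ⊗ₖ P) *ᵥ vec (c • 1) = c • vec P := by
  rw [kronecker_mulVec_vec, Matrix.mul_smul, Matrix.mul_one, Matrix.smul_mul, hP.eq, hPP.eq]
  rfl

theorem sum_sq_vec_smul_one [Semiring R] (c : R) :
    ∑ p, vec (c • (1 : Matrix n n R)) p ^ 2 = Fintype.card n * c ^ 2 := by
  simp [Fintype.sum_prod_type, one_apply]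

end Matrix

noncomputable def projXMinus : Matrix (Fin 2) (Fin 2) ℝ := !![1/2, -1/2; -1/2, 1/2]

theorem projXMinus_isSymm : projXMinus.IsSymm := by
  ext i j; fin_cases i <;> fin_cases j <;> rfl

theorem projXMinus_isIdempotentElem : IsIdempotentElem projXMinus := by
  unfold IsIdempotentElem projXMinus
  ext i j; fin_cases i <;> fin_cases j <;> norm_num [Matrix.mul_apply, Fin.sum_univ_two]

theorem projXMinus_posSemidef : projXMinus.PosSemidef := by
  have h : projXMinusᴴ * projXMinus = projXMinus := by
    rw [conjTranspose_eq_transpose_of_trivial, projXMinus_isSymm.eq, projXMinus_isIdempotentElem.eq]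
  exact h ▸ posSemidef_conjTranspose_mul_self projXMinus

theorem sum_sq_projXMinus_mulVec (v : Fin 2 → ℝ) :
    ∑ i, (projXMinus *ᵥ v) i ^ 2 = (v 0 - v 1) ^ 2 / 2 := by
  simp only [projXMinus, mulVec, dotProduct, Fin.sum_univ_two, of_apply, cons_val', cons_val_zero,
    cons_val_one, cons_val_fin_one]
  ring

theorem sum_sq_vec_projXMinus : ∑ p, vec projXMinus p ^ 2 = 1 := by
  simp [projXMinus, Fintype.sum_prod_type, Fin.sum_univ_two]
  norm_num

/-- **Parallel repetition fails for nonnegative vectors**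
(Fact `max_of_reals_is_not_norm`). Let `M = (1/2)[[1,-1],[-1,1]]` be the
orthogonal projector onto `(e₀ - e₁)/√2`. Then `M` is symmetric positive
semidefinite; every nonnegative unit vector `v ∈ ℝ²` has `‖Mv‖ ≤ 1/√2`; and the
nonnegative unit vector `w = (e₀⊗e₀ + e₁⊗e₁)/√2` satisfies
`‖(M ⊗ M)w‖ = 1/√2 > (1/√2)²`. Hence `‖M ⊗ M‖₊ > ‖M‖₊²`. -/
theorem kronecker_exceeds_square_on_nonneg :
    ∀ M : Matrix (Fin 2) (Fin 2) ℝ, M = !![1/2, -1/2; -1/2, 1/2] →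
    ∀ w : Fin 2 × Fin 2 → ℝ,
      w = (fun p => if p.1 = p.2 then 1 / Real.sqrt 2 else 0) →
    M.IsSymm ∧ M.PosSemidef ∧
      (∀ v : Fin 2 → ℝ, (∀ i, 0 ≤ v i) → v 0 ^ 2 + v 1 ^ 2 = 1 →
        Real.sqrt (∑ i, (M.mulVec v i) ^ 2) ≤ 1 / Real.sqrt 2) ∧
      (∀ p, 0 ≤ w p) ∧
      Real.sqrt (∑ p, (w p) ^ 2) = 1 ∧
      Real.sqrt (∑ p, ((M ⊗ₖ M).mulVec w p) ^ 2) = 1 / Real.sqrt 2 ∧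
      (1 / Real.sqrt 2) ^ 2 < 1 / Real.sqrt 2 := by
  intro M hM w hw
  obtain rfl : M = projXMinus := hM
  set c := 1 / Real.sqrt 2 with hc
  have hc_pos : 0 < c := by positivity
  have hc_sq : c ^ 2 = 1 / 2 := by rw [hc, div_pow, Real.sq_sqrt zero_le_two, one_pow]
  obtain rfl : w = vec (c • 1) := by
    rw [hw]; funext p; simp [one_apply, eq_comm]
  refine ⟨projXMinus_isSymm, projXMinus_posSemidef, fun v hv hv_unit => ?_, fun p => ?_, ?_, ?_, ?_⟩
  · rw [sum_sq_projXMinus_mulVec, ← Real.sqrt_sq hc_pos.le, hc_sq]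
    gcongr
    linarith [sub_sq_le_sq_add_sq (hv 0) (hv 1)]
  · simp only [vec, Matrix.smul_apply, one_apply, smul_eq_mul]
    positivity
  · rw [sum_sq_vec_smul_one, hc_sq]; norm_num
  · simp_rw [kronecker_mulVec_vec_smul_one projXMinus_isSymm projXMinus_isIdempotentElem,
      Pi.smul_apply, smul_eq_mul, mul_pow, ← Finset.mul_sum, sum_sq_vec_projXMinus, mul_one,
      Real.sqrt_sq hc_pos.le]
  · have hc_lt_one : c < 1 := by
      rw [hc, div_lt_one (by positivity)]
      exact Real.lt_sqrt_of_sq_lt (by norm_num)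
    exact pow_lt_self_of_lt_one₀ hc_pos hc_lt_one one_lt_two
end

section
/- Let n be a positive integer, let Π be an n × n complex Hermitian positive semidefinite matrix, and let s ≥ 0. Suppose that for every unit vector χ : Fin n → ℝ with χ(i) ≥ 0 for all i, one has ⟨χ, Π χ⟩ ≤ s (viewing χ as a complex vector; the quadratic form is real since Π is Hermitian). Then for every unit vector ψ : Fin n → ℝ (with entries of arbitrary sign), ⟨ψ, Π ψ⟩ ≤ 2s. -/
open Matrix ComplexOrder

/-!
Split a real unit vector `ψ = ψ⁺ - ψ⁻` into its positive and negative parts, which are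
nonnegative and satisfy `‖ψ⁺‖² + ‖ψ⁻‖² = 1`. For the quadratic form `Q` of `P` the
parallelogram law gives `Q ψ + Q (ψ⁺ + ψ⁻) = 2 Q ψ⁺ + 2 Q ψ⁻`. Positive semidefiniteness
makes `Q (ψ⁺ + ψ⁻) ≥ 0`, and by homogeneity the hypothesis bounds `Q ψ⁺ + Q ψ⁻` by
`s (‖ψ⁺‖² + ‖ψ⁻‖²) = s`, so `Q ψ ≤ 2s`.
-/

theorem Matrix.star_dotProduct_mulVec_parallelogram {m R : Type*} [Fintype m] [CommRing R]
    [StarRing R] (A : Matrix m m R) (x y : m → R) :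
    star (x - y) ⬝ᵥ A *ᵥ (x - y) + star (x + y) ⬝ᵥ A *ᵥ (x + y)
      = 2 * (star x ⬝ᵥ A *ᵥ x) + 2 * (star y ⬝ᵥ A *ᵥ y) := by
  simp only [star_add, star_sub, mulVec_add, mulVec_sub, add_dotProduct, sub_dotProduct,
    dotProduct_add, dotProduct_sub]
  ring

theorem Real.posPart_sq_add_negPart_sq (a : ℝ) : a⁺ ^ 2 + a⁻ ^ 2 = a ^ 2 := by
  rcases le_total 0 a with ha | ha
  · simp [posPart_eq_self.mpr ha, negPart_eq_zero.mpr ha]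
  · simp [posPart_eq_zero.mpr ha, negPart_eq_neg.mpr ha]

namespace Matrix

variable {m : Type*} [Fintype m] (P : Matrix m m ℂ)

noncomputable def realQuadForm (x : m → ℝ) : ℝ :=
  (star (fun i => (x i : ℂ)) ⬝ᵥ P *ᵥ fun i => (x i : ℂ)).re

theorem realQuadForm_zero : P.realQuadForm 0 = 0 := by
  simp [realQuadForm, ← Pi.zero_def]

theorem realQuadForm_smul (c : ℝ) (x : m → ℝ) :
    P.realQuadForm (c • x) = c ^ 2 * P.realQuadForm x := by
  have hvec : (fun i => ((c • x) i : ℂ)) = (c : ℂ) • fun i => (x i : ℂ) := by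
    ext i; simp
  simp only [realQuadForm, hvec, star_smul, mulVec_smul, smul_dotProduct, dotProduct_smul,
    Complex.star_def, Complex.conj_ofReal, smul_eq_mul, ← mul_assoc]
  push_cast [← Complex.ofReal_mul, Complex.re_ofReal_mul]
  ring

theorem realQuadForm_parallelogram (x y : m → ℝ) :
    P.realQuadForm (x - y) + P.realQuadForm (x + y)
      = 2 * P.realQuadForm x + 2 * P.realQuadForm y := by
  have h := congrArg Complex.re
    (P.star_dotProduct_mulVec_parallelogram (fun i => (x i : ℂ)) fun i => (y i : ℂ))
  simpa [realQuadForm, Pi.sub_def, Pi.add_def] using h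

variable {P}

theorem PosSemidef.realQuadForm_nonneg (hP : P.PosSemidef) (x : m → ℝ) :
    0 ≤ P.realQuadForm x :=
  (Complex.nonneg_iff.mp (hP.dotProduct_mulVec_nonneg _)).1

theorem realQuadForm_le_sum_sq_mul_of_unit {s : ℝ}
    (hunit : ∀ χ : m → ℝ, (∀ i, 0 ≤ χ i) → ∑ i, χ i ^ 2 = 1 → P.realQuadForm χ ≤ s)
    {χ : m → ℝ} (hχ : ∀ i, 0 ≤ χ i) :
    P.realQuadForm χ ≤ (∑ i, χ i ^ 2) * s := by
  set t := ∑ i, χ i ^ 2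
  have ht : 0 ≤ t := Finset.sum_nonneg fun i _ => sq_nonneg (χ i)
  rcases ht.eq_or_lt with ht0 | ht0
  · have hzero : χ = 0 := funext fun i => pow_eq_zero_iff two_ne_zero |>.mp <|
      (Finset.sum_eq_zero_iff_of_nonneg fun i _ => sq_nonneg (χ i)).mp ht0.symm i
        (Finset.mem_univ i)
    rw [hzero, realQuadForm_zero, ← ht0, zero_mul]
  · set c := (√t)⁻¹
    have hc : c ^ 2 * t = 1 := by
      rw [inv_pow, Real.sq_sqrt ht, inv_mul_cancel₀ ht0.ne']
    have hunit_c : ∑ i, (c • χ) i ^ 2 = 1 := by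
      simpa only [Pi.smul_apply, smul_eq_mul, mul_pow, ← Finset.mul_sum] using hc
    have hbound := hunit (c • χ) (fun i => mul_nonneg (by positivity) (hχ i)) hunit_c
    rw [realQuadForm_smul] at hbound
    calc P.realQuadForm χ = t * (c ^ 2 * P.realQuadForm χ) := by
          rw [← mul_assoc, mul_comm t, hc, one_mul]
      _ ≤ t * s := mul_le_mul_of_nonneg_left hbound ht

end Matrix

theorem real_amplitude_soundness_general (n : ℕ)
    (P : Matrix (Fin n) (Fin n) ℂ)
    (hPSD : P.PosSemidef)
    (s : ℝ)
    (hbound : ∀ χ : Fin n → ℝ, (∀ i, 0 ≤ χ i) → ∑ i, (χ i) ^ 2 = 1 →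
      (star (fun i => (χ i : ℂ)) ⬝ᵥ P.mulVec (fun i => (χ i : ℂ))).re ≤ s) :
    ∀ ψ : Fin n → ℝ, ∑ i, (ψ i) ^ 2 = 1 →
      (star (fun i => (ψ i : ℂ)) ⬝ᵥ P.mulVec (fun i => (ψ i : ℂ))).re ≤ 2 * s := by
  intro ψ hψ
  have hnorm_split : (∑ i, ψ⁺ i ^ 2) * s + (∑ i, ψ⁻ i ^ 2) * s = s := by
    simp only [← add_mul, ← Finset.sum_add_distrib, Pi.posPart_apply, Pi.negPart_apply,
      Real.posPart_sq_add_negPart_sq, hψ, one_mul]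
  have hpos := P.realQuadForm_le_sum_sq_mul_of_unit hbound (χ := ψ⁺) (posPart_nonneg ψ)
  have hneg := P.realQuadForm_le_sum_sq_mul_of_unit hbound (χ := ψ⁻) (negPart_nonneg ψ)
  have hsum_nonneg := hPSD.realQuadForm_nonneg (ψ⁺ + ψ⁻)
  have hpar := P.realQuadForm_parallelogram ψ⁺ ψ⁻
  rw [posPart_sub_negPart] at hpar
  change P.realQuadForm ψ ≤ 2 * s
  linarith

/-- **Real-amplitude soundness** (first part of Proposition
`QMA⁺_{c,s} ⊆ QMA_{c,4s}`). If a Hermitian positive semidefinite matrix `P`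
accepts every real nonnegative unit vector with probability at most `s`, then it
accepts every real unit vector (with entries of arbitrary sign) with probability
at most `2s`. -/
theorem real_amplitude_soundness (n : ℕ) (hn : 0 < n)
    (P : Matrix (Fin n) (Fin n) ℂ)
    (hHerm : P.IsHermitian) (hPSD : P.PosSemidef)
    (s : ℝ) (hs : 0 ≤ s)
    (hbound : ∀ χ : Fin n → ℝ, (∀ i, 0 ≤ χ i) → ∑ i, (χ i) ^ 2 = 1 →
      (star (fun i => (χ i : ℂ)) ⬝ᵥ P.mulVec (fun i => (χ i : ℂ))).re ≤ s) :
    ∀ ψ : Fin n → ℝ, ∑ i, (ψ i) ^ 2 = 1 →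
      (star (fun i => (ψ i : ℂ)) ⬝ᵥ P.mulVec (fun i => (ψ i : ℂ))).re ≤ 2 * s :=
  real_amplitude_soundness_general n P hPSD s hbound
end
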